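/- arXiv:1911.08082 — 2 statements merged into one kernel-verified Lean document; each statement's English description precedes it below -/
import Mathlib

section
/- Let X ∈ ℝ^{m×n} and let r be a non-negative integer with r ≤ min(m,n). For any real matrices A ∈ ℝ^{r×m} and B ∈ ℝ^{r×n} satisfying A·Aᵀ = I_r and B·Bᵀ = I_r, one has tr(A·X·Bᵀ) ≤ Σ_{i=1}^{r} σ_i(X). -/
/-! Expand the rows `bᵢ` of `B` in an orthonormal basis `vⱼ` of eigenvectors of `XᵀX`, sorted so
that `σⱼ = ‖X vⱼ‖` decreases; then `tr(A X Bᵀ) = ∑ⱼ ∑ᵢ ⟪aᵢ, X vⱼ⟫ ⟪bᵢ, vⱼ⟫`. Since the `X vⱼ` are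
orthogonal, AM–GM bounds the inner sum by `σⱼ eⱼ`, where
`eⱼ = (∑ᵢ ⟪aᵢ, X vⱼ⟫² / σⱼ² + ∑ᵢ ⟪bᵢ, vⱼ⟫²) / 2` (if `σⱼ = 0` then `X vⱼ = 0` and the first sum
is `0`). Bessel's inequality, applied once to the orthonormal rows of `A` and `B` and once to the
orthogonal families `X vⱼ` and `vⱼ`, gives `0 ≤ eⱼ ≤ 1` and `∑ⱼ eⱼ ≤ r`; for such weights
`∑ⱼ σⱼ eⱼ ≤ σ₁ + ⋯ + σᵣ`. -/

open Matrix
/-- The `i`-th singular value (0-indexed, in decreasing order) of a real `m × n` matrix `X`: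
the nonnegative square roots of the eigenvalues of `Xᵀ * X`, sorted decreasingly,
with value `0` for indices `i ≥ n`. -/
noncomputable def sval {m n : ℕ} (X : Matrix (Fin m) (Fin n) ℝ) (i : ℕ) : ℝ :=
  if h : i < n then
    Real.sqrt ((Matrix.isHermitian_conjTranspose_mul_self X).eigenvalues
      (Tuple.sort (fun j => -((Matrix.isHermitian_conjTranspose_mul_self X).eigenvalues j)) ⟨i, h⟩))
  else 0

open Finset
open scoped RealInnerProductSpace

-- Compare each term with the threshold `g r`: `g j * e j ≤ g r * e j + (g j - g r)` for `j < r`.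
theorem sum_mul_le_sum_range_of_antitone {n r : ℕ} {g : ℕ → ℝ} (hg : Antitone g) (hg0 : 0 ≤ g)
    {e : Fin n → ℝ} (he0 : ∀ j, 0 ≤ e j) (he1 : ∀ j, e j ≤ 1) (he : ∑ j, e j ≤ r) :
    ∑ j : Fin n, g j * e j ≤ ∑ i ∈ range r, g i := by
  have hterm (j : Fin n) : g j * e j ≤ g r * e j + if (j : ℕ) < r then g j - g r else 0 := by
    split_ifs with hj
    · nlinarith [hg hj.le, he1 j, he0 j]
    · nlinarith [hg (not_lt.mp hj), he0 j]
  have hhead : ∑ j : Fin n, (if (j : ℕ) < r then g j - g r else 0) ≤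
      ∑ i ∈ range r, (g i - g r) := by
    rw [Fin.sum_univ_eq_sum_range (fun i => if i < r then g i - g r else 0), ← sum_filter]
    refine sum_le_sum_of_subset_of_nonneg (fun i => by simp) fun i hi _ => ?_
    exact sub_nonneg.2 (hg (mem_range.1 hi).le)
  calc ∑ j : Fin n, g j * e j
      ≤ ∑ j : Fin n, (g r * e j + if (j : ℕ) < r then g j - g r else 0) :=
        sum_le_sum fun j _ => hterm j
    _ = g r * ∑ j, e j + ∑ j : Fin n, (if (j : ℕ) < r then g j - g r else 0) := by
        rw [sum_add_distrib, mul_sum]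
    _ ≤ g r * r + ∑ i ∈ range r, (g i - g r) :=
        add_le_add (mul_le_mul_of_nonneg_left he (hg0 r)) hhead
    _ = ∑ i ∈ range r, g i := by
        rw [sum_sub_distrib, sum_const, card_range, nsmul_eq_mul]
        ring

theorem mul_le_mul_div_sq_add_sq_div_two {x y s : ℝ} (hs : 0 ≤ s) (hx : s = 0 → x = 0) :
    x * y ≤ s * ((x ^ 2 / s ^ 2 + y ^ 2) / 2) := by
  rcases hs.eq_or_lt with rfl | hs
  · simp [hx rfl]
  · rw [div_add' _ _ _ (by positivity), div_div, mul_div_assoc', le_div_iff₀ (by positivity)]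
    nlinarith [sq_nonneg (x - s * y)]

variable {E F : Type*} [NormedAddCommGroup E] [InnerProductSpace ℝ E]
  [NormedAddCommGroup F] [InnerProductSpace ℝ F]

-- The terms with `u j = 0` vanish (`x / 0 = 0`); the others form an orthonormal family after
-- normalisation.
theorem sum_inner_sq_div_norm_sq_le {ι : Type*} [Fintype ι] {u : ι → E}
    (hu : Pairwise fun j k => ⟪u j, u k⟫ = 0) (x : E) :
    ∑ j, ⟪u j, x⟫ ^ 2 / ‖u j‖ ^ 2 ≤ ‖x‖ ^ 2 := by
  classical
  have hw : Orthonormal ℝ fun j : {j // u j ≠ 0} => ‖u j‖⁻¹ • u j := by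
    rw [orthonormal_iff_ite]
    intro j k
    split_ifs with h
    · subst h
      rw [real_inner_smul_left, real_inner_smul_right, real_inner_self_eq_norm_sq]
      field_simp [norm_ne_zero_iff.2 j.2]
    · rw [real_inner_smul_left, real_inner_smul_right, hu (Subtype.coe_injective.ne h)]
      simp
  calc ∑ j, ⟪u j, x⟫ ^ 2 / ‖u j‖ ^ 2 = ∑ j : {j // u j ≠ 0}, ‖⟪‖u j‖⁻¹ • u j, x⟫‖ ^ 2 := by
        rw [← sum_filter_of_ne (p := fun j => u j ≠ 0) (fun j _ h hj => h (by simp [hj])),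
          sum_subtype (p := fun j => u j ≠ 0) _ (fun j => by simp)]
        refine sum_congr rfl fun j _ => ?_
        rw [real_inner_smul_left, Real.norm_eq_abs, sq_abs]
        field_simp
    _ ≤ ‖x‖ ^ 2 := hw.sum_inner_products_le x

namespace Orthonormal

variable {κ : Type*} [Fintype κ] {c : κ → E}

theorem sum_inner_sq_le (hc : Orthonormal ℝ c) (x : E) : ∑ i, ⟪c i, x⟫ ^ 2 ≤ ‖x‖ ^ 2 := by
  simpa only [Real.norm_eq_abs, sq_abs] using hc.sum_inner_products_le x (s := univ)

theorem sum_inner_sq_div_norm_sq_le_one (hc : Orthonormal ℝ c) (x : E) :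
    ∑ i, ⟪c i, x⟫ ^ 2 / ‖x‖ ^ 2 ≤ 1 := by
  rw [← sum_div]
  exact div_le_one_of_le₀ (hc.sum_inner_sq_le x) (sq_nonneg _)

theorem sum_sum_inner_sq_div_norm_sq_le_card (hc : Orthonormal ℝ c) {ι : Type*} [Fintype ι]
    {u : ι → E} (hu : Pairwise fun j k => ⟪u j, u k⟫ = 0) :
    ∑ j, ∑ i, ⟪c i, u j⟫ ^ 2 / ‖u j‖ ^ 2 ≤ Fintype.card κ := by
  rw [sum_comm]
  calc ∑ i, ∑ j, ⟪c i, u j⟫ ^ 2 / ‖u j‖ ^ 2 ≤ ∑ i, ‖c i‖ ^ 2 := sum_le_sum fun i _ => by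
        simpa only [real_inner_comm] using sum_inner_sq_div_norm_sq_le hu (c i)
    _ = Fintype.card κ := by simp [hc.norm_eq_one]

end Orthonormal

section OrthonormalBasis

variable {ι κ : Type*} [Fintype ι] [Fintype κ]

theorem sum_inner_apply_eq_sum_sum (v : OrthonormalBasis ι ℝ E) (T : E →ₗ[ℝ] F)
    (a : κ → F) (b : κ → E) :
    ∑ i, ⟪a i, T (b i)⟫ = ∑ j, ∑ i, ⟪a i, T (v j)⟫ * ⟪b i, v j⟫ := by
  conv_lhs => enter [2, i]; rw [← v.sum_repr' (b i)]
  simp only [map_sum, map_smul, inner_sum, real_inner_smul_right, real_inner_comm (b _)]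
  rw [sum_comm]
  simp only [mul_comm]

theorem sum_inner_apply_le (v : OrthonormalBasis ι ℝ E) (T : E →ₗ[ℝ] F)
    (a : κ → F) (b : κ → E) :
    ∑ i, ⟪a i, T (b i)⟫ ≤ ∑ j, ‖T (v j)‖ *
      ((∑ i, ⟪a i, T (v j)⟫ ^ 2 / ‖T (v j)‖ ^ 2 + ∑ i, ⟪b i, v j⟫ ^ 2 / ‖v j‖ ^ 2) / 2) := by
  rw [sum_inner_apply_eq_sum_sum v]
  refine sum_le_sum fun j _ => ?_
  calc ∑ i, ⟪a i, T (v j)⟫ * ⟪b i, v j⟫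
      ≤ ∑ i, ‖T (v j)‖ * ((⟪a i, T (v j)⟫ ^ 2 / ‖T (v j)‖ ^ 2 + ⟪b i, v j⟫ ^ 2) / 2) := by
        refine sum_le_sum fun i _ =>
          mul_le_mul_div_sq_add_sq_div_two (norm_nonneg _) fun h => ?_
        rw [norm_eq_zero.1 h, inner_zero_right]
    _ = _ := by
        simp only [v.orthonormal.norm_eq_one, one_pow, div_one, ← mul_sum, ← sum_div,
          sum_add_distrib]

end OrthonormalBasis

theorem sum_inner_apply_le_sum_range {n r : ℕ} (v : OrthonormalBasis (Fin n) ℝ E)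
    (T : E →ₗ[ℝ] F) (hT : Pairwise fun j k => ⟪T (v j), T (v k)⟫ = 0) {g : ℕ → ℝ}
    (hg : Antitone g) (hg0 : 0 ≤ g) (hgT : ∀ j : Fin n, ‖T (v j)‖ = g j)
    {a : Fin r → F} {b : Fin r → E} (ha : Orthonormal ℝ a) (hb : Orthonormal ℝ b) :
    ∑ i, ⟪a i, T (b i)⟫ ≤ ∑ i ∈ range r, g i := by
  set e : Fin n → ℝ := fun j =>
    (∑ i, ⟪a i, T (v j)⟫ ^ 2 / ‖T (v j)‖ ^ 2 + ∑ i, ⟪b i, v j⟫ ^ 2 / ‖v j‖ ^ 2) / 2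
  have he0 (j : Fin n) : 0 ≤ e j := by positivity
  have he1 (j : Fin n) : e j ≤ 1 := by
    dsimp only [e]
    linarith [ha.sum_inner_sq_div_norm_sq_le_one (T (v j)),
      hb.sum_inner_sq_div_norm_sq_le_one (v j)]
  have he : ∑ j, e j ≤ r := by
    have hTv := ha.sum_sum_inner_sq_div_norm_sq_le_card hT
    have hv := hb.sum_sum_inner_sq_div_norm_sq_le_card v.orthonormal.2
    rw [Fintype.card_fin] at hTv hv
    calc ∑ j, e j = (∑ j, ∑ i, ⟪a i, T (v j)⟫ ^ 2 / ‖T (v j)‖ ^ 2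
          + ∑ j, ∑ i, ⟪b i, v j⟫ ^ 2 / ‖v j‖ ^ 2) / 2 := by
          simp only [e, ← sum_add_distrib, sum_div]
      _ ≤ r := by linarith
  calc ∑ i, ⟪a i, T (b i)⟫ ≤ ∑ j, ‖T (v j)‖ * e j := sum_inner_apply_le v T a b
    _ = ∑ j : Fin n, g j * e j := by simp only [hgT]
    _ ≤ ∑ i ∈ range r, g i := sum_mul_le_sum_range_of_antitone hg hg0 he0 he1 he

theorem sval_nonneg {m n : ℕ} (X : Matrix (Fin m) (Fin n) ℝ) : 0 ≤ sval X := fun i => by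
  unfold sval
  split_ifs
  exacts [Real.sqrt_nonneg _, le_rfl]

theorem sval_antitone {m n : ℕ} (X : Matrix (Fin m) (Fin n) ℝ) : Antitone (sval X) := by
  intro i k hik
  by_cases hk : k < n
  · have hi : i < n := hik.trans_lt hk
    simp only [sval, dif_pos hi, dif_pos hk]
    refine Real.sqrt_le_sqrt (neg_le_neg_iff.1 ?_)
    exact Tuple.monotone_sort (fun j => -(isHermitian_conjTranspose_mul_self X).eigenvalues j)
      (show (⟨i, hi⟩ : Fin n) ≤ ⟨k, hk⟩ from hik)
  · rw [sval, dif_neg hk]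
    exact sval_nonneg X i

namespace Matrix

theorem orthonormal_toLp_of_mul_transpose_eq_one {κ m : Type*} [Fintype m] [DecidableEq κ]
    {A : Matrix κ m ℝ} (hA : A * Aᵀ = 1) : Orthonormal ℝ fun i => WithLp.toLp 2 (A i) := by
  rw [← gram_eq_one_iff_orthonormal, ← hA]
  ext i k
  simp [gram_apply, EuclideanSpace.inner_toLp_toLp, mul_apply, dotProduct, mul_comm]

theorem trace_mul_mul_transpose {κ m n : Type*} [Fintype κ] [Fintype m] [Fintype n]
    [DecidableEq n] (A : Matrix κ m ℝ) (X : Matrix m n ℝ) (B : Matrix κ n ℝ) :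
    trace (A * X * Bᵀ) =
      ∑ i, ⟪WithLp.toLp 2 (A i), X.toEuclideanLin (WithLp.toLp 2 (B i))⟫ := by
  simp only [trace, diag, mul_apply, transpose_apply, EuclideanSpace.inner_toLp_toLp,
    toLpLin_toLp, toLin'_apply, dotProduct, mulVec, sum_mul, star_trivial]
  refine sum_congr rfl fun i _ => ?_
  rw [sum_comm]
  exact sum_congr rfl fun _ _ => sum_congr rfl fun _ _ => by ring

theorem inner_toEuclideanLin_eigenvectorBasis {m n : Type*} [Fintype m] [Fintype n]
    [DecidableEq m] [DecidableEq n] (X : Matrix m n ℝ) (j k : n) :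
    ⟪X.toEuclideanLin ((isHermitian_conjTranspose_mul_self X).eigenvectorBasis j),
      X.toEuclideanLin ((isHermitian_conjTranspose_mul_self X).eigenvectorBasis k)⟫ =
      (isHermitian_conjTranspose_mul_self X).eigenvalues k *
        ⟪(isHermitian_conjTranspose_mul_self X).eigenvectorBasis j,
          (isHermitian_conjTranspose_mul_self X).eigenvectorBasis k⟫ := by
  rw [← LinearMap.adjoint_inner_right, ← toEuclideanLin_conjTranspose_eq_adjoint]
  simp only [toLpLin_apply, mulVec_mulVec, IsHermitian.mulVec_eigenvectorBasis,
    WithLp.toLp_smul, WithLp.toLp_ofLp, real_inner_smul_right]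

variable {m n : ℕ} (X : Matrix (Fin m) (Fin n) ℝ)

noncomputable def rightSingularVectorBasis :
    OrthonormalBasis (Fin n) ℝ (EuclideanSpace ℝ (Fin n)) :=
  (isHermitian_conjTranspose_mul_self X).eigenvectorBasis.reindex
    (Tuple.sort fun j => -(isHermitian_conjTranspose_mul_self X).eigenvalues j).symm

theorem pairwise_inner_toEuclideanLin_rightSingularVectorBasis :
    Pairwise fun j k => ⟪X.toEuclideanLin (X.rightSingularVectorBasis j),
      X.toEuclideanLin (X.rightSingularVectorBasis k)⟫ = 0 := by
  intro j k hjk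
  simp only [rightSingularVectorBasis, OrthonormalBasis.reindex_apply, Equiv.symm_symm,
    inner_toEuclideanLin_eigenvectorBasis]
  rw [OrthonormalBasis.inner_eq_zero _ ((Equiv.injective _).ne hjk), mul_zero]

theorem norm_toEuclideanLin_rightSingularVectorBasis (j : Fin n) :
    ‖X.toEuclideanLin (X.rightSingularVectorBasis j)‖ = sval X j := by
  rw [norm_eq_sqrt_real_inner, rightSingularVectorBasis, OrthonormalBasis.reindex_apply,
    Equiv.symm_symm, inner_toEuclideanLin_eigenvectorBasis, real_inner_self_eq_norm_sq,
    OrthonormalBasis.norm_eq_one, one_pow, mul_one, sval, dif_pos j.2]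

end Matrix

theorem trace_le_sum_singularValues_general {m n r : ℕ}
    (X : Matrix (Fin m) (Fin n) ℝ)
    (A : Matrix (Fin r) (Fin m) ℝ) (B : Matrix (Fin r) (Fin n) ℝ)
    (hA : A * Aᵀ = 1) (hB : B * Bᵀ = 1) :
    Matrix.trace (A * X * Bᵀ) ≤ ∑ i ∈ Finset.range r, sval X i := by
  rw [Matrix.trace_mul_mul_transpose]
  exact sum_inner_apply_le_sum_range X.rightSingularVectorBasis X.toEuclideanLin
    X.pairwise_inner_toEuclideanLin_rightSingularVectorBasis (sval_antitone X)
    (sval_nonneg X) X.norm_toEuclideanLin_rightSingularVectorBasis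
    (Matrix.orthonormal_toLp_of_mul_transpose_eq_one hA)
    (Matrix.orthonormal_toLp_of_mul_transpose_eq_one hB)

theorem trace_le_sum_singularValues {m n r : ℕ} (hr : r ≤ min m n)
    (X : Matrix (Fin m) (Fin n) ℝ)
    (A : Matrix (Fin r) (Fin m) ℝ) (B : Matrix (Fin r) (Fin n) ℝ)
    (hA : A * Aᵀ = 1) (hB : B * Bᵀ = 1) :
    Matrix.trace (A * X * Bᵀ) ≤ ∑ i ∈ Finset.range r, sval X i :=
  trace_le_sum_singularValues_general X A B hA hB
end

section
/- A tensor Q ∈ ℝ^{n×n×n3} is an orthogonal tensor (i.e., Qᵀ∗Q = Q∗Qᵀ = I, the identity tensor) if and only if for every j ∈ ℤ/n3ℤ the complex matrix Q̄_j (the j-th slice of the DFT of Q along the third mode) is unitary. -/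
open Matrix

/-- The t-product of third-order tensors, given by their frontal slices indexed by `ZMod n3`:
`(A∗B)_i = Σ_k A_k · B_{i−k}`. -/
def tProd {n1 n2 n4 n3 : ℕ} [NeZero n3] (A : ZMod n3 → Matrix (Fin n1) (Fin n2) ℝ)
    (B : ZMod n3 → Matrix (Fin n2) (Fin n4) ℝ) : ZMod n3 → Matrix (Fin n1) (Fin n4) ℝ :=
  fun i => ∑ k : ZMod n3, A k * B (i - k)

/-- The tensor transpose of a third-order tensor: `(Aᵀ)_k = (A_{−k})ᵀ`. -/
def tTrans {n1 n2 n3 : ℕ} (A : ZMod n3 → Matrix (Fin n1) (Fin n2) ℝ) :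
    ZMod n3 → Matrix (Fin n2) (Fin n1) ℝ :=
  fun k => (A (-k))ᵀ

/-- The identity tensor: frontal slice `0` is the identity matrix, all others are zero. -/
def idTensor (n n3 : ℕ) : ZMod n3 → Matrix (Fin n) (Fin n) ℝ :=
  fun k => if k = 0 then 1 else 0

/-- The DFT of a third-order tensor along the third mode:
`Ā_j = Σ_k e^{−2πi·jk/n3} A_k`. -/
noncomputable def dft {n1 n2 n3 : ℕ} [NeZero n3] (A : ZMod n3 → Matrix (Fin n1) (Fin n2) ℝ) :
    ZMod n3 → Matrix (Fin n1) (Fin n2) ℂ :=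
  fun j => ∑ k : ZMod n3,
    Complex.exp (-2 * (Real.pi : ℂ) * Complex.I * ((j.val : ℂ) * (k.val : ℂ)) / (n3 : ℂ)) •
      (A k).map (fun x => (x : ℂ))


/-!
The DFT along the third mode is Mathlib's discrete Fourier transform `ZMod.dft` applied to the
complexified slices. By the convolution theorem it turns the t-product into the slicewise matrix
product; since the characters of `ZMod n3` are unimodular it turns the tensor transpose into the
slicewise conjugate transpose; it sends the identity tensor to identity matrices; and by Fourier
inversion it is injective. Hence each of the two tensor identities `Qᵀ∗Q = I` and `Q∗Qᵀ = I` holds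
if and only if the corresponding matrix identity holds at every frequency.
-/

open Finset
open scoped ZMod

namespace ZMod

variable {N : ℕ} [NeZero N] {l m p : Type*}

lemma dft_single_zero {E : Type*} [AddCommGroup E] [Module ℂ E] (x : E) (j : ZMod N) :
    𝓕 (Pi.single 0 x) j = x := by
  simp [dft_apply, Pi.single_apply]

lemma dft_conjTranspose_comp_neg (Φ : ZMod N → Matrix m p ℂ) (j : ZMod N) :
    𝓕 (fun k => (Φ (-k))ᴴ) j = (𝓕 Φ j)ᴴ := by
  rw [dft_apply, dft_apply, conjTranspose_sum]
  refine Fintype.sum_equiv (Equiv.neg _) _ _ fun k => ?_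
  rw [Equiv.neg_apply, conjTranspose_smul, neg_mul, neg_neg, AddChar.map_neg_eq_conj]
  rfl

lemma dft_convolution [Fintype m] (Φ : ZMod N → Matrix l m ℂ) (Ψ : ZMod N → Matrix m p ℂ)
    (j : ZMod N) : 𝓕 (fun i => ∑ k, Φ k * Ψ (i - k)) j = 𝓕 Φ j * 𝓕 Ψ j := by
  simp only [dft_apply, smul_sum, Matrix.sum_mul]
  simp only [Matrix.mul_sum, Matrix.smul_mul, Matrix.mul_smul, smul_smul]
  rw [sum_comm]
  refine sum_congr rfl fun k _ => Fintype.sum_equiv (Equiv.subRight k) _ _ fun i => ?_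
  rw [Equiv.subRight_apply, ← AddChar.map_add_eq_mul, ← neg_add, ← add_mul, sub_add_cancel]

end ZMod

section Tensor

variable {n1 n2 n4 n3 : ℕ}

def complexify (A : ZMod n3 → Matrix (Fin n1) (Fin n2) ℝ) :
    ZMod n3 → Matrix (Fin n1) (Fin n2) ℂ :=
  fun k => (A k).map (fun x => (x : ℂ))

lemma complexify_injective :
    Function.Injective (complexify : (ZMod n3 → Matrix (Fin n1) (Fin n2) ℝ) → _) :=
  fun _ _ h => funext fun k => Matrix.map_injective Complex.ofReal_injective (congrFun h k)

lemma complexify_tProd [NeZero n3] (A : ZMod n3 → Matrix (Fin n1) (Fin n2) ℝ)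
    (B : ZMod n3 → Matrix (Fin n2) (Fin n4) ℝ) :
    complexify (tProd A B) = fun i => ∑ k, complexify A k * complexify B (i - k) :=
  funext fun _ => (map_sum Complex.ofRealHom.toAddMonoidHom.mapMatrix _ _).trans
    (sum_congr rfl fun _ _ => Matrix.map_mul (f := Complex.ofRealHom))

lemma complexify_tTrans (A : ZMod n3 → Matrix (Fin n1) (Fin n2) ℝ) :
    complexify (tTrans A) = fun k => (complexify A (-k))ᴴ :=
  funext fun k => by ext; simp [complexify, tTrans]

lemma complexify_idTensor (n : ℕ) : complexify (idTensor n n3) = Pi.single 0 1 :=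
  funext fun k => by by_cases hk : k = 0 <;> simp [complexify, idTensor, hk]

variable [NeZero n3]

lemma dft_eq_zmodDft_complexify (A : ZMod n3 → Matrix (Fin n1) (Fin n2) ℝ) :
    dft A = 𝓕 (complexify A) := by
  ext1 j
  refine sum_congr rfl fun k _ => ?_
  have : -(k * j) = Int.cast (-(k.val * j.val : ℤ)) := by push_cast; simp
  rw [this, ZMod.stdAddChar_coe]
  congr 2
  push_cast
  ring

lemma dft_injective : Function.Injective (dft : (ZMod n3 → Matrix (Fin n1) (Fin n2) ℝ) → _) := by
  intro A B h
  rw [dft_eq_zmodDft_complexify, dft_eq_zmodDft_complexify] at h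
  exact complexify_injective (ZMod.dft.injective h)

lemma dft_tProd (A : ZMod n3 → Matrix (Fin n1) (Fin n2) ℝ)
    (B : ZMod n3 → Matrix (Fin n2) (Fin n4) ℝ) (j : ZMod n3) :
    dft (tProd A B) j = dft A j * dft B j := by
  simp only [dft_eq_zmodDft_complexify, complexify_tProd, ZMod.dft_convolution]

lemma dft_tTrans (A : ZMod n3 → Matrix (Fin n1) (Fin n2) ℝ) (j : ZMod n3) :
    dft (tTrans A) j = (dft A j)ᴴ := by
  simp only [dft_eq_zmodDft_complexify, complexify_tTrans, ZMod.dft_conjTranspose_comp_neg]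

lemma dft_idTensor (n : ℕ) (j : ZMod n3) : dft (idTensor n n3) j = 1 := by
  rw [dft_eq_zmodDft_complexify, complexify_idTensor, ZMod.dft_single_zero]

end Tensor

/-- A tensor `Q` is orthogonal (`Qᵀ∗Q = Q∗Qᵀ = I`) iff every DFT slice `Q̄_j` is unitary. -/
theorem orthogonal_iff_dft_unitary {n n3 : ℕ} [NeZero n3]
    (Q : ZMod n3 → Matrix (Fin n) (Fin n) ℝ) :
    (tProd (tTrans Q) Q = idTensor n n3 ∧ tProd Q (tTrans Q) = idTensor n n3) ↔
      ∀ j : ZMod n3, (dft Q j)ᴴ * dft Q j = 1 ∧ dft Q j * (dft Q j)ᴴ = 1 := by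
  simp only [← dft_injective.eq_iff, funext_iff, dft_tProd, dft_tTrans, dft_idTensor,
    ← forall_and]
end
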